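/- arXiv:2407.14082 — 4 statements merged into one kernel-verified Lean document; each statement's English description precedes it below -/
import Mathlib

section
/- Generalized Saito criterion. Let k be a field, n ≥ 1, R = k[x_0,…,x_n]. Let A be a κ×r matrix over R with κ < r whose i-th row has all entries homogeneous of degree d_i and which has rank κ over Frac(R). Let N be an r×(r−κ) matrix over R whose columns are homogeneous vectors, such that A·N = 0 and N has rank r−κ over Frac(R); let G be an r×κ matrix over R whose columns are homogeneous vectors, such that det(A·G) ≠ 0. Let Θ = (N | G) be the r×r matrix obtained by juxtaposing N and G, and let g_A be a homogeneous gcd of the set of κ×κ minors of A. Then: (1) there exists a homogeneous polynomial h ∈ R such that det(Θ)·g_A = h·det(A·G); and (2) if h is a unit of R (a nonzero constant), then the r−κ columns of N form a basis of the R-module {v ∈ R^r : A·v = 0}. -/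
open MvPolynomial

/-- The set of maximal minors of a `p × q` matrix: determinants of its
`min p q × min p q` square submatrices. -/
def maxMinors {R : Type*} [CommRing R] {p q : ℕ} (M : Matrix (Fin p) (Fin q) R) : Set R :=
  {d | ∃ (g₁ : Fin (min p q) → Fin p) (g₂ : Fin (min p q) → Fin q),
    Function.Injective g₁ ∧ Function.Injective g₂ ∧ d = (M.submatrix g₁ g₂).det}

/-- `g` is a homogeneous gcd of the set `S`. -/
def IsHomogeneousGcd {k : Type*} [Field k] {n : ℕ}
    (S : Set (MvPolynomial (Fin (n + 1)) k)) (g : MvPolynomial (Fin (n + 1)) k) : Prop :=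
  (∃ d, g.IsHomogeneous d) ∧ (∀ s ∈ S, g ∣ s) ∧ ∀ c, (∀ s ∈ S, c ∣ s) → c ∣ g

section AuxSaito

section GcdAux
variable {α : Type*} [CommMonoidWithZero α] [GCDMonoid α]

lemma listFoldrGcd_dvd (L : List α) : ∀ a ∈ L, L.foldr gcd 0 ∣ a := by
  induction L with
  | nil => simp
  | cons x L ih =>
    intro a ha
    rcases List.mem_cons.1 ha with rfl | ha
    · exact gcd_dvd_left _ _
    · exact (gcd_dvd_right _ _).trans (ih a ha)

lemma dvd_listFoldrGcd (L : List α) (c : α) (h : ∀ a ∈ L, c ∣ a) : c ∣ L.foldr gcd 0 := by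
  induction L with
  | nil => simp
  | cons x L ih =>
    exact dvd_gcd (h x (List.mem_cons_self)) (ih fun a ha => h a (List.mem_cons_of_mem _ ha))

lemma dvd_mul_listFoldrGcd (L : List α) (x b : α) (h : ∀ a ∈ L, x ∣ b * a) :
    x ∣ b * L.foldr gcd 0 := by
  induction L with
  | nil => simp
  | cons a L ih =>
    have h1 : x ∣ gcd (b * a) (b * L.foldr gcd 0) :=
      dvd_gcd (h a (List.mem_cons_self)) (ih fun a ha => h a (List.mem_cons_of_mem _ ha))
    exact h1.trans (gcd_mul_left' b a (L.foldr gcd 0)).dvd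

end GcdAux

section MatrixAux

/-- complement equiv for an embedding -/
lemma exists_compl_equiv {κ r : ℕ} (hκr : κ ≤ r) (e : Fin κ ↪ Fin r) :
    ∃ τ : (Fin (r - κ) ⊕ Fin κ) ≃ Fin r, ∀ j, τ (Sum.inr j) = e j := by
  classical
  set S : Finset (Fin r) := Finset.univ \ Finset.univ.image e with hS
  have hcard : S.card = r - κ := by
    rw [hS, Finset.card_sdiff_of_subset (Finset.subset_univ _), Finset.card_univ,
      Finset.card_image_of_injective _ e.injective, Finset.card_univ]
    simp
  set f : (Fin (r - κ) ⊕ Fin κ) → Fin r :=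
    Sum.elim (fun i => (S.equivFin.symm (finCongr hcard.symm i) : Fin r)) e with hf
  have hmemS : ∀ i, (S.equivFin.symm (finCongr hcard.symm i) : Fin r) ∈ S := fun i =>
    (S.equivFin.symm (finCongr hcard.symm i)).2
  have hinj : Function.Injective f := by
    rintro (i | i) (j | j) hij
    · simp only [hf, Sum.elim_inl] at hij
      have := S.equivFin.symm.injective (Subtype.ext hij)
      simpa using congrArg (finCongr hcard) this
    · exfalso
      have h1 := hmemS i
      rw [hf] at hij
      simp only [Sum.elim_inl, Sum.elim_inr] at hij
      rw [hij, hS] at h1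
      simp at h1
    · exfalso
      have h1 := hmemS j
      rw [hf] at hij
      simp only [Sum.elim_inl, Sum.elim_inr] at hij
      rw [← hij, hS] at h1
      simp at h1
    · simpa using e.injective (by simpa [hf] using hij)
  have hbij : Function.Bijective f := by
    rw [Fintype.bijective_iff_injective_and_card]
    refine ⟨hinj, by simp; omega⟩
  exact ⟨Equiv.ofBijective f hbij, fun j => rfl⟩

/-- Key determinant identity divisibility. -/
lemma key_dvd {R : Type*} [CommRing R] {κ r : ℕ}
    (A : Matrix (Fin κ) (Fin r) R) (N : Matrix (Fin r) (Fin (r - κ)) R)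
    (G : Matrix (Fin r) (Fin κ) R) (hAN : A * N = 0)
    (ρ : (Fin (r - κ) ⊕ Fin κ) ≃ Fin r) (e : Fin κ ↪ Fin r)
    (τ : (Fin (r - κ) ⊕ Fin κ) ≃ Fin r) (hτ : ∀ j, τ (Sum.inr j) = e j) :
    (A * G).det ∣ ((Matrix.fromCols N G).submatrix ⇑ρ id).det * (A.submatrix id ⇑e).det := by
  classical
  set S₁ : Matrix (Fin (r - κ)) (Fin r) R :=
    (1 : Matrix (Fin r) (Fin r) R).submatrix (fun i => τ (Sum.inl i)) id with hS₁
  set M : Matrix (Fin (r - κ) ⊕ Fin κ) (Fin r) R := Matrix.fromRows S₁ A with hM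
  set P := Matrix.fromCols N G with hP
  have hMP : M * P = Matrix.fromBlocks (S₁ * N) (S₁ * G) 0 (A * G) := by
    rw [hM, hP, Matrix.fromRows_mul_fromCols, hAN]
  have h1 : (M * P).det = (S₁ * N).det * (A * G).det := by
    rw [hMP, Matrix.det_fromBlocks_zero₂₁]
  have h2 : M.submatrix id ⇑ρ * P.submatrix ⇑ρ id = M * P := by
    rw [Matrix.submatrix_mul_equiv M P id ρ id, Matrix.submatrix_id_id]
  have hMτ : M.submatrix id ⇑τ =
      Matrix.fromBlocks 1 0 (A.submatrix id (fun i => τ (Sum.inl i))) (A.submatrix id ⇑e) := by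
    ext i j
    cases i with
    | inl i =>
      cases j with
      | inl j =>
        simp [hM, hS₁, Matrix.one_apply, τ.injective.eq_iff]
      | inr j =>
        simp [hM, hS₁, Matrix.one_apply, τ.injective.eq_iff]
    | inr i =>
      cases j with
      | inl j => simp [hM]
      | inr j => simp [hM, hτ]
  have h3 : (M.submatrix id ⇑τ).det = (A.submatrix id ⇑e).det := by
    rw [hMτ, Matrix.det_fromBlocks_zero₁₂, Matrix.det_one, one_mul]
  set π : Equiv.Perm (Fin (r - κ) ⊕ Fin κ) := ρ.trans τ.symm with hπ
  have h4 : M.submatrix id ⇑ρ = (M.submatrix id ⇑τ).submatrix id ⇑π := by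
    ext i j
    simp [hπ, Matrix.submatrix_apply]
  set ε : R := ((Equiv.Perm.sign π : ℤ) : R) with hε'
  have hε : ε * ε = 1 := by
    rcases Int.units_eq_one_or (Equiv.Perm.sign π) with h | h <;> simp [hε', h]
  have h5 : (M.submatrix id ⇑ρ).det = ε * (A.submatrix id ⇑e).det := by
    rw [h4, Matrix.det_permute', h3, hε']
  have heq : (ε * (A.submatrix id ⇑e).det) * (P.submatrix ⇑ρ id).det
      = (S₁ * N).det * (A * G).det := by
    rw [← h5, ← Matrix.det_mul, h2, h1]
  have hfin : (P.submatrix ⇑ρ id).det * (A.submatrix id ⇑e).det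
      = (A * G).det * (ε * (S₁ * N).det) := by
    linear_combination ε * heq -
      ((A.submatrix id ⇑e).det * (P.submatrix ⇑ρ id).det) * hε
  exact ⟨_, hfin⟩

end MatrixAux

lemma maxMinors_eq {R : Type*} [CommRing R] {κ r : ℕ} (h : κ ≤ r)
    (A : Matrix (Fin κ) (Fin r) R) :
    maxMinors A = Set.range (fun e : Fin κ ↪ Fin r => (A.submatrix id ⇑e).det) := by
  have hmin : min κ r = κ := min_eq_left h
  ext s
  constructor
  · rintro ⟨g₁, g₂, h₁, h₂, rfl⟩
    have hbij : Function.Bijective g₁ :=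
      (Fintype.bijective_iff_injective_and_card g₁).2 ⟨h₁, by simp [hmin]⟩
    set gE := Equiv.ofBijective g₁ hbij with hgE
    refine ⟨⟨fun j => g₂ (gE.symm j), h₂.comp gE.symm.injective⟩, ?_⟩
    have hsub : A.submatrix g₁ g₂ =
        (A.submatrix id (fun j => g₂ (gE.symm j))).submatrix ⇑gE ⇑gE := by
      ext i j
      simp [Matrix.submatrix_apply, hgE, Equiv.ofBijective_apply]
    simp only [Function.Embedding.coeFn_mk]
    rw [hsub, Matrix.det_submatrix_equiv_self]
  · rintro ⟨e, rfl⟩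
    refine ⟨⇑(finCongr hmin), ⇑e ∘ ⇑(finCongr hmin), (finCongr hmin).injective,
      e.injective.comp (finCongr hmin).injective, ?_⟩
    have hsub : A.submatrix ⇑(finCongr hmin) (⇑e ∘ ⇑(finCongr hmin)) =
        (A.submatrix id ⇑e).submatrix ⇑(finCongr hmin) ⇑(finCongr hmin) := rfl
    rw [hsub, Matrix.det_submatrix_equiv_self]

section Homog

variable {k : Type*} [CommRing k] {σ : Type*}

lemma det_isHomogeneous {ι : Type*} [DecidableEq ι] [Fintype ι]
    (M : Matrix ι ι (MvPolynomial σ k)) (a b : ι → ℕ)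
    (h : ∀ i j, (M i j).IsHomogeneous (a i + b j)) :
    M.det.IsHomogeneous (∑ i, a i + ∑ i, b i) := by
  rw [Matrix.det_apply]
  apply IsHomogeneous.sum
  intro σ' _
  have hprod : (∏ i, M (σ' i) i).IsHomogeneous (∑ i, a i + ∑ i, b i) := by
    have := IsHomogeneous.prod Finset.univ (fun i => M (σ' i) i)
      (fun i => a (σ' i) + b i) (fun i _ => h (σ' i) i)
    have hsum : ∑ i, (a (σ' i) + b i) = ∑ i, a i + ∑ i, b i := by
      rw [Finset.sum_add_distrib, Equiv.sum_comp σ' a]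
    rwa [hsum] at this
  rcases Int.units_eq_one_or (Equiv.Perm.sign σ') with hs | hs <;>
    simp only [hs, one_smul, Units.neg_smul] <;>
    [exact hprod; exact hprod.neg]

lemma isHomogeneous_of_mul [IsDomain k] {h q : MvPolynomial σ k} {dp dq : ℕ}
    (hq : q.IsHomogeneous dq) (hq0 : q ≠ 0) (hp : (h * q).IsHomogeneous dp) :
    h.IsHomogeneous (dp - dq) := by
  classical
  have key : ∀ i, homogeneousComponent i h ≠ 0 → i + dq = dp := by
    intro i hi
    by_contra hne
    have hmem : ∀ j : ℕ, (homogeneousComponent j h * q) ∈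
        homogeneousSubmodule σ k (j + dq) := fun j =>
      (mem_homogeneousSubmodule _ _).2 ((homogeneousComponent_isHomogeneous j h).mul hq)
    have hrep : homogeneousComponent (i + dq) (h * q) = homogeneousComponent i h * q := by
      conv_lhs => rw [← sum_homogeneousComponent h, Finset.sum_mul, map_sum]
      have hterm : ∀ j ∈ Finset.range (h.totalDegree + 1),
          homogeneousComponent (i + dq) (homogeneousComponent j h * q)
            = if j = i then homogeneousComponent j h * q else 0 := by
        intro j _
        rw [homogeneousComponent_of_mem (hmem j)]
        congr 1
        simp [Nat.add_right_cancel_iff, eq_comm]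
      rw [Finset.sum_congr rfl hterm, Finset.sum_ite_eq' (Finset.range (h.totalDegree + 1))]
      have hile : i ∈ Finset.range (h.totalDegree + 1) := by
        rw [Finset.mem_range]
        by_contra hgt
        exact hi (homogeneousComponent_eq_zero _ h (by omega))
      simp [hile]
    have hmem2 : (h * q) ∈ homogeneousSubmodule σ k dp := (mem_homogeneousSubmodule _ _).2 hp
    rw [homogeneousComponent_of_mem hmem2, if_neg (by omega)] at hrep
    exact mul_ne_zero hi hq0 hrep.symm
  conv => rw [← sum_homogeneousComponent h]
  apply IsHomogeneous.sum
  intro i _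
  by_cases hi : homogeneousComponent i h = 0
  · rw [hi]; exact isHomogeneous_zero _ _ _
  · have : i = dp - dq := by have := key i hi; omega
    rw [this] at *
    exact homogeneousComponent_isHomogeneous _ _

end Homog

end AuxSaito

set_option maxHeartbeats 1600000 in
/-- Generalized Saito criterion: with `Θ = (N | G)`,
`det(Θ) · g_A = h · det(A·G)` for some homogeneous `h`, and if `h` is a unit then the
columns of `N` are a basis of `{v : A·v = 0}`. -/
theorem stmt_1 {k : Type*} [Field k] (n : ℕ) (hn : 1 ≤ n)
    (κ r : ℕ) (hκr : κ < r)
    (A : Matrix (Fin κ) (Fin r) (MvPolynomial (Fin (n + 1)) k))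
    (d : Fin κ → ℕ) (hA : ∀ i j, (A i j).IsHomogeneous (d i))
    (hArank :
      (A.map (algebraMap (MvPolynomial (Fin (n + 1)) k)
        (FractionRing (MvPolynomial (Fin (n + 1)) k)))).rank = κ)
    (N : Matrix (Fin r) (Fin (r - κ)) (MvPolynomial (Fin (n + 1)) k))
    (eN : Fin (r - κ) → ℕ) (hN : ∀ i l, (N i l).IsHomogeneous (eN l))
    (hAN : A * N = 0)
    (hNrank :
      (N.map (algebraMap (MvPolynomial (Fin (n + 1)) k)
        (FractionRing (MvPolynomial (Fin (n + 1)) k)))).rank = r - κ)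
    (G : Matrix (Fin r) (Fin κ) (MvPolynomial (Fin (n + 1)) k))
    (eG : Fin κ → ℕ) (hG : ∀ i l, (G i l).IsHomogeneous (eG l))
    (hAG : (A * G).det ≠ 0)
    (Θ : Matrix (Fin r) (Fin r) (MvPolynomial (Fin (n + 1)) k))
    (hΘ : Θ = (Matrix.fromCols N G).submatrix id
      (((finSumFinEquiv (m := r - κ) (n := κ)).trans
        (finCongr (by omega : r - κ + κ = r))).symm))
    (gA : MvPolynomial (Fin (n + 1)) k)
    (hgA : IsHomogeneousGcd (maxMinors A) gA) :
    ∃ h : MvPolynomial (Fin (n + 1)) k,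
      (∃ dh, h.IsHomogeneous dh) ∧
      Θ.det * gA = h * (A * G).det ∧
      (IsUnit h →
        ∃ b : Module.Basis (Fin (r - κ)) (MvPolynomial (Fin (n + 1)) k)
            (LinearMap.ker A.mulVecLin),
          ∀ l, ((b l : Fin r → MvPolynomial (Fin (n + 1)) k)) = fun i => N i l) := by
  classical
  letI : GCDMonoid (MvPolynomial (Fin (n + 1)) k) :=
    UniqueFactorizationMonoid.toGCDMonoid (MvPolynomial (Fin (n + 1)) k)
  have hκr' : κ ≤ r := hκr.le
  set ρ : (Fin (r - κ) ⊕ Fin κ) ≃ Fin r :=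
    (finSumFinEquiv (m := r - κ) (n := κ)).trans (finCongr (by omega : r - κ + κ = r)) with hρ
  have hΘρ : Θ = (Matrix.fromCols N G).submatrix id ⇑ρ.symm := hΘ
  -- determinant of Θ as det of the ρ-row-submatrix of fromCols
  have hdetconv : ∀ N' : Matrix (Fin r) (Fin (r - κ)) (MvPolynomial (Fin (n + 1)) k),
      ((Matrix.fromCols N' G).submatrix id ⇑ρ.symm).det
        = ((Matrix.fromCols N' G).submatrix ⇑ρ id).det := by
    intro N'
    have hsub : (Matrix.fromCols N' G).submatrix id ⇑ρ.symm
        = ((Matrix.fromCols N' G).submatrix ⇑ρ id).submatrix ⇑ρ.symm ⇑ρ.symm := by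
      ext i j
      simp [Matrix.submatrix_apply]
    rw [hsub, Matrix.det_submatrix_equiv_self]
  -- the main divisibility engine
  have main_dvd : ∀ N' : Matrix (Fin r) (Fin (r - κ)) (MvPolynomial (Fin (n + 1)) k), A * N' = 0 →
      (A * G).det ∣ ((Matrix.fromCols N' G).submatrix ⇑ρ id).det * gA := by
    intro N' hAN'
    set Φdet := ((Matrix.fromCols N' G).submatrix ⇑ρ id).det with hΦdet
    set L : List (MvPolynomial (Fin (n + 1)) k) := (Finset.univ : Finset (Fin κ ↪ Fin r)).toList.map
      (fun e : Fin κ ↪ Fin r => (A.submatrix id ⇑e).det) with hL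
    have hLdvd : ∀ a ∈ L, (A * G).det ∣ Φdet * a := by
      intro a ha
      obtain ⟨e, _, rfl⟩ := List.mem_map.1 ha
      obtain ⟨τ, hτ⟩ := exists_compl_equiv hκr' e
      exact key_dvd A N' G hAN' ρ e τ hτ
    have h1 : (A * G).det ∣ Φdet * L.foldr gcd 0 := dvd_mul_listFoldrGcd L _ _ hLdvd
    have h2 : L.foldr gcd 0 ∣ gA := by
      apply hgA.2.2
      intro s hs
      rw [maxMinors_eq hκr'] at hs
      obtain ⟨e, rfl⟩ := hs
      exact listFoldrGcd_dvd L _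
        (List.mem_map.2 ⟨e, Finset.mem_toList.2 (Finset.mem_univ e), rfl⟩)
    exact h1.trans (mul_dvd_mul_left _ h2)
  obtain ⟨h, hEq0⟩ := main_dvd N hAN
  rw [← hdetconv N, ← hΘρ] at hEq0
  have hEq : Θ.det * gA = h * (A * G).det := by rw [hEq0]; ring
  refine ⟨h, ?_, hEq, ?_⟩
  · -- homogeneity of h
    obtain ⟨dg, hdg⟩ := hgA.1
    have hΘhom : Θ.det.IsHomogeneous
        (∑ _j : Fin r, (0 : ℕ) + ∑ j : Fin r, Sum.elim eN eG (ρ.symm j)) := by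
      apply det_isHomogeneous Θ (fun _ => 0) (fun j => Sum.elim eN eG (ρ.symm j))
      intro i j
      rw [hΘρ]
      rcases hs : ρ.symm j with l | m <;>
        simp [Matrix.submatrix_apply, hs, Matrix.fromCols_apply_inl,
          Matrix.fromCols_apply_inr, hN, hG]
    have hAGhom : (A * G).det.IsHomogeneous (∑ i, d i + ∑ j, eG j) := by
      apply det_isHomogeneous
      intro i j
      rw [Matrix.mul_apply]
      exact MvPolynomial.IsHomogeneous.sum _ _ _ (fun l _ => (hA i l).mul (hG l j))
    have hnum := hEq ▸ (hΘhom.mul hdg)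
    exact ⟨_, isHomogeneous_of_mul hAGhom hAG hnum⟩
  · -- basis part
    intro hu
    have hne : Θ.det * gA ≠ 0 := by
      rw [hEq]
      exact mul_ne_zero hu.ne_zero hAG
    have hΘne : Θ.det ≠ 0 := left_ne_zero_of_mul hne
    have hgAne : gA ≠ 0 := right_ne_zero_of_mul hne
    -- columns of N lie in the kernel
    have hcol : ∀ l, (fun i => N i l) ∈ LinearMap.ker A.mulVecLin := by
      intro l
      rw [LinearMap.mem_ker]
      funext i
      have := congrFun (congrFun hAN i) l
      simpa [Matrix.mulVecLin_apply, Matrix.mulVec, dotProduct, Matrix.mul_apply] using this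
    -- Θ entries at N-columns
    have hΘN : ∀ i l, Θ i (ρ (Sum.inl l)) = N i l := by
      intro i l
      rw [hΘρ]
      simp [Matrix.submatrix_apply]
    have hΘG : ∀ i m, Θ i (ρ (Sum.inr m)) = G i m := by
      intro i m
      rw [hΘρ]
      simp [Matrix.submatrix_apply]
    -- spanning
    have hspan : ∀ v : Fin r → MvPolynomial (Fin (n + 1)) k, A.mulVec v = 0 →
        ∃ c : Fin (r - κ) → MvPolynomial (Fin (n + 1)) k, v = N.mulVec c := by
      intro v hv
      have hNker : ∀ l, A.mulVec (fun i => N i l) = 0 := by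
        intro l
        have := hcol l
        rwa [LinearMap.mem_ker, Matrix.mulVecLin_apply] at this
      -- (a) cramer coordinates at G-columns vanish
      have hGdet : ∀ m : Fin κ, (Θ.updateCol (ρ (Sum.inr m)) v).det = 0 := by
        intro m
        set K := FractionRing (MvPolynomial (Fin (n + 1)) k) with hK
        set φ := algebraMap (MvPolynomial (Fin (n + 1)) k) K with hφ
        have hφinj : Function.Injective ⇑φ := IsFractionRing.injective _ K
        apply hφinj
        rw [map_zero, RingHom.map_det]
        rw [← Matrix.exists_mulVec_eq_zero_iff]
        have hker : Module.finrank K ↥(LinearMap.ker (A.map ⇑φ).mulVecLin) = r - κ := by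
          have h1 := LinearMap.finrank_range_add_finrank_ker ((A.map ⇑φ).mulVecLin)
          rw [Module.finrank_fintype_fun_eq_card] at h1
          have h2 : Module.finrank K ↥(LinearMap.range (A.map ⇑φ).mulVecLin) = κ := hArank
          rw [h2] at h1
          simp only [Fintype.card_fin] at h1
          omega
        have hmapker : ∀ u : Fin r → MvPolynomial (Fin (n + 1)) k, A.mulVec u = 0 →
            (fun i => φ (u i)) ∈ LinearMap.ker (A.map ⇑φ).mulVecLin := by
          intro u hu
          rw [LinearMap.mem_ker]
          funext i
          have h3 := congrFun hu i
          simp only [Matrix.mulVecLin_apply, Matrix.mulVec, dotProduct,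
            Matrix.map_apply, Pi.zero_apply] at h3 ⊢
          have h4 : (∑ j, φ (A i j) * φ (u j)) = φ (∑ j, A i j * u j) := by
            rw [map_sum]
            exact Finset.sum_congr rfl fun j _ => (map_mul φ _ _).symm
          rw [h4, h3, map_zero]
        set y : (Fin (r - κ) ⊕ Unit) → ↥(LinearMap.ker (A.map ⇑φ).mulVecLin) :=
          Sum.elim (fun l => ⟨fun i => φ (N i l), hmapker _ (hNker l)⟩)
                   (fun _ => ⟨fun i => φ (v i), hmapker _ hv⟩) with hy
        have hnli : ¬ LinearIndependent K y := by
          intro hliK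
          have hcard := hliK.fintype_card_le_finrank
          rw [hker] at hcard
          simp [Fintype.card_sum] at hcard
        rw [Fintype.not_linearIndependent_iff] at hnli
        obtain ⟨a, ha, s₀, hs₀⟩ := hnli
        have ha' : ∑ s, a s • ((y s : Fin r → K)) = 0 := by
          have h4 := congrArg (Subtype.val) ha
          simpa using h4
        have hsum : ∀ i, (∑ l, a (Sum.inl l) * φ (N i l)) + a (Sum.inr ()) * φ (v i) = 0 := by
          intro i
          have h5 := congrFun ha' i
          simp only [Finset.sum_apply, Pi.smul_apply, smul_eq_mul, Pi.zero_apply,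
            Fintype.sum_sum_type, Finset.univ_unique, Finset.sum_singleton] at h5
          simpa [hy] using h5
        refine ⟨fun j => Sum.elim (fun l => a (Sum.inl l))
          (fun m' => if m' = m then a (Sum.inr ()) else 0) (ρ.symm j), ?_, ?_⟩
        · cases s₀ with
          | inl l =>
            intro h0
            apply hs₀
            have h6 := congrFun h0 (ρ (Sum.inl l))
            simpa using h6
          | inr u =>
            intro h0
            apply hs₀
            have h6 := congrFun h0 (ρ (Sum.inr m))
            cases u
            simpa using h6
        · funext i
          show (dotProduct (fun j => ((Θ.updateCol (ρ (Sum.inr m)) v).map ⇑φ) i j)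
            fun j => Sum.elim (fun l => a (Sum.inl l))
              (fun m' => if m' = m then a (Sum.inr ()) else 0) (ρ.symm j)) = 0
          rw [dotProduct,
            ← Equiv.sum_comp ρ (fun j => ((Θ.updateCol (ρ (Sum.inr m)) v).map ⇑φ) i j *
              Sum.elim (fun l => a (Sum.inl l))
                (fun m' => if m' = m then a (Sum.inr ()) else 0) (ρ.symm j)),
            Fintype.sum_sum_type]
          simp only [Equiv.symm_apply_apply, Sum.elim_inl, Sum.elim_inr]
          have hA1 : ∀ l : Fin (r - κ),
              ((Θ.updateCol (ρ (Sum.inr m)) v).map ⇑φ) i (ρ (Sum.inl l)) = φ (N i l) := by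
            intro l
            rw [Matrix.map_apply, Matrix.updateCol_apply,
              if_neg (by simp [ρ.injective.eq_iff]), hΘN]
          have hA2 : ((Θ.updateCol (ρ (Sum.inr m)) v).map ⇑φ) i (ρ (Sum.inr m)) = φ (v i) := by
            rw [Matrix.map_apply, Matrix.updateCol_apply, if_pos rfl]
          have e1 : ∑ l, ((Θ.updateCol (ρ (Sum.inr m)) v).map ⇑φ) i (ρ (Sum.inl l))
                * a (Sum.inl l)
              = ∑ l, a (Sum.inl l) * φ (N i l) :=
            Finset.sum_congr rfl fun l _ => by rw [hA1 l, mul_comm]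
          have e2 : ∑ m', ((Θ.updateCol (ρ (Sum.inr m)) v).map ⇑φ) i (ρ (Sum.inr m'))
                * (if m' = m then a (Sum.inr ()) else 0)
              = a (Sum.inr ()) * φ (v i) := by
            rw [Finset.sum_eq_single m]
            · rw [hA2, if_pos rfl, mul_comm]
            · intro b _ hb
              rw [if_neg hb, mul_zero]
            · intro habs
              exact absurd (Finset.mem_univ m) habs
          rw [e1, e2]
          exact hsum i
      -- (b) cramer coordinates at N-columns are divisible by det Θ
      have hNdet : ∀ l : Fin (r - κ), ∃ cl,
          (Θ.updateCol (ρ (Sum.inl l)) v).det = Θ.det * cl := by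
        intro l
        set N' := N.updateCol l v with hN'
        have hAN' : A * N' = 0 := by
          apply Matrix.ext
          intro i m
          rw [Matrix.mul_apply, Matrix.zero_apply]
          by_cases hm : m = l
          · subst hm
            have h3 := congrFun hv i
            simpa [hN', Matrix.updateCol_apply, Matrix.mulVec, dotProduct] using h3
          · have h3 := congrFun (congrFun hAN i) m
            simpa [hN', Matrix.updateCol_apply, hm, Matrix.mul_apply] using h3
        have hΘ'det : (Θ.updateCol (ρ (Sum.inl l)) v).det
            = ((Matrix.fromCols N' G).submatrix ⇑ρ id).det := by
          have hsub : Θ.updateCol (ρ (Sum.inl l)) v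
              = ((Matrix.fromCols N' G).submatrix ⇑ρ id).submatrix ⇑ρ.symm ⇑ρ.symm := by
            ext i j
            simp only [Matrix.submatrix_apply, Equiv.apply_symm_apply, id_eq]
            rcases hs : ρ.symm j with l' | m'
            · have hj : j = ρ (Sum.inl l') := by rw [← hs, Equiv.apply_symm_apply]
              subst hj
              by_cases hl : l' = l
              · subst hl
                simp [Matrix.updateCol_apply, hN']
              · simp [Matrix.updateCol_apply, ρ.injective.eq_iff, hl, hN', hΘN]
            · have hj : j = ρ (Sum.inr m') := by rw [← hs, Equiv.apply_symm_apply]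
              subst hj
              simp [Matrix.updateCol_apply, ρ.injective.eq_iff, hΘG]
          rw [hsub, Matrix.det_submatrix_equiv_self]
        obtain ⟨h', hEq'⟩ := main_dvd N' hAN'
        have hcc : (Θ.updateCol (ρ (Sum.inl l)) v).det * h = Θ.det * h' := by
          apply mul_right_cancel₀ (mul_ne_zero hgAne hAG)
          rw [hΘ'det]
          linear_combination (-(((Matrix.fromCols N' G).submatrix ⇑ρ id).det * gA)) * hEq
            + (Θ.det * gA) * hEq'
        refine ⟨h' * ↑hu.unit⁻¹, ?_⟩
        have hhu : (↑hu.unit⁻¹ : MvPolynomial (Fin (n + 1)) k) * h = 1 := by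
          exact hu.val_inv_mul
        linear_combination (↑hu.unit⁻¹ : MvPolynomial (Fin (n + 1)) k) * hcc
          - (Θ.updateCol (ρ (Sum.inl l)) v).det * hhu
      choose c hcspec using hNdet
      refine ⟨c, ?_⟩
      have hw := Matrix.mulVec_cramer Θ v
      funext i
      have h1' : ∑ j, Θ i j * Matrix.cramer Θ v j = Θ.det * v i := by
        have h3 := congrFun hw i
        simpa [Matrix.mulVec, dotProduct, Pi.smul_apply, smul_eq_mul] using h3
      rw [← Equiv.sum_comp ρ (fun j => Θ i j * Matrix.cramer Θ v j),
        Fintype.sum_sum_type] at h1'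
      have hz : ∀ m, Matrix.cramer Θ v (ρ (Sum.inr m)) = 0 := by
        intro m
        rw [Matrix.cramer_apply]
        exact hGdet m
      have h3 : Θ.det * (∑ l, N i l * c l) = Θ.det * v i := by
        rw [← h1', Finset.mul_sum]
        have h4 : ∀ m ∈ Finset.univ, Θ i (ρ (Sum.inr m)) * Matrix.cramer Θ v (ρ (Sum.inr m))
            = 0 := fun m _ => by rw [hz m, mul_zero]
        rw [Finset.sum_congr rfl h4]
        simp only [Finset.sum_const_zero, add_zero]
        apply Finset.sum_congr rfl
        intro l _
        rw [hΘN i l, Matrix.cramer_apply, hcspec l]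
        ring
      have h4 := mul_left_cancel₀ hΘne h3
      show v i = dotProduct (fun l => N i l) c
      rw [dotProduct]
      exact h4.symm
    -- linear independence of the columns of N
    have hli : LinearIndependent (MvPolynomial (Fin (n + 1)) k)
        (fun l (i : Fin r) => N i l) := by
      rw [Fintype.linearIndependent_iff]
      intro g hg
      set c' : Fin r → MvPolynomial (Fin (n + 1)) k :=
        fun j => Sum.elim g (fun _ => 0) (ρ.symm j) with hc'
      have hΘc' : Θ.mulVec c' = 0 := by
        funext i
        have hg' := congrFun hg i
        simp only [Finset.sum_apply, Pi.smul_apply, smul_eq_mul, Pi.zero_apply] at hg'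
        show (dotProduct (fun j => Θ i j) c') = 0
        rw [dotProduct, ← Equiv.sum_comp ρ (fun j => Θ i j * c' j),
          Fintype.sum_sum_type]
        simp only [hc', Equiv.symm_apply_apply, Sum.elim_inl, Sum.elim_inr, mul_zero,
          Finset.sum_const_zero, add_zero]
        rw [← hg']
        exact Finset.sum_congr rfl fun l _ => by rw [hΘN i l, mul_comm]
      have h0 : Θ.det • c' = (0 : Fin r → MvPolynomial (Fin (n + 1)) k) := by
        have h1 := congrArg (Θ.adjugate.mulVec) hΘc'
        rwa [Matrix.mulVec_mulVec, Matrix.adjugate_mul, Matrix.smul_mulVec,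
          Matrix.one_mulVec, Matrix.mulVec_zero] at h1
      intro l
      have h2 := congrFun h0 (ρ (Sum.inl l))
      simp only [hc', Pi.smul_apply, Equiv.symm_apply_apply, Sum.elim_inl, smul_eq_mul,
        Pi.zero_apply] at h2
      exact (mul_eq_zero.1 h2).resolve_left hΘne
    -- build the basis
    set ν : Fin (r - κ) → LinearMap.ker A.mulVecLin := fun l => ⟨fun i => N i l, hcol l⟩ with hν
    have hliν : LinearIndependent (MvPolynomial (Fin (n + 1)) k) ν := by
      apply LinearIndependent.of_comp (LinearMap.ker A.mulVecLin).subtype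
      exact hli
    have hsp : ⊤ ≤ Submodule.span (MvPolynomial (Fin (n + 1)) k) (Set.range ν) := by
      rintro ⟨v, hv⟩ -
      obtain ⟨c, hc⟩ := hspan v (by simpa [Matrix.mulVecLin_apply] using hv)
      have hveq : (⟨v, hv⟩ : LinearMap.ker A.mulVecLin) = ∑ l, c l • ν l := by
        apply Subtype.ext
        have hcoe : ((∑ l, c l • ν l : LinearMap.ker A.mulVecLin) : Fin r →
            MvPolynomial (Fin (n + 1)) k) = ∑ l, c l • (fun i => N i l) := by
          simp [hν]
        rw [hcoe]
        funext i
        simp only [Finset.sum_apply, Pi.smul_apply, smul_eq_mul]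
        show v i = _
        rw [hc]
        simp [Matrix.mulVec, dotProduct, mul_comm]
      rw [hveq]
      exact Submodule.sum_mem _ fun l _ =>
        Submodule.smul_mem _ _ (Submodule.subset_span ⟨l, rfl⟩)
    exact ⟨Module.Basis.mk hliν hsp, fun l => by rw [Module.Basis.mk_apply]⟩
end

section
/- Let k be a field, n ≥ 1, R = k[x_0,…,x_n]. Let M be a finitely generated reflexive R-module and N a finitely generated torsion-free R-module such that M and N have the same rank, i.e. dim_{Frac(R)}(Frac(R) ⊗_R M) = dim_{Frac(R)}(Frac(R) ⊗_R N). Let α : M → N be an injective R-linear map such that the localization of coker(α) at every prime ideal of R of height at most 1 vanishes (equivalently, every prime in the support of coker(α) has height at least 2). Then α is an isomorphism. -/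
open MvPolynomial

universe v

/-- UFD arithmetic: if for every prime `q` there is `s` not divisible by `q` with
`s * a ∈ (r)`, then `r ∣ a`. -/
private theorem aux_dvd {R : Type*} [CommRing R] [IsDomain R] [UniqueFactorizationMonoid R]
    (r : R) : r ≠ 0 → ∀ a : R,
    (∀ q : R, Prime q → ∃ s b : R, ¬ q ∣ s ∧ s * a = r * b) → r ∣ a := by
  induction r using WfDvdMonoid.induction_on_irreducible with
  | zero => exact fun h => absurd rfl h
  | unit u hu' => exact fun _ a _ => hu'.dvd
  | mul r' q hr' hq ih =>
    intro hne a H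
    have hqp : Prime q := UniqueFactorizationMonoid.irreducible_iff_prime.mp hq
    obtain ⟨s, b, hqs, hsb⟩ := H q hqp
    have hqsa : q ∣ s * a := ⟨r' * b, by rw [hsb]; ring⟩
    have hqa : q ∣ a := (hqp.dvd_mul.mp hqsa).resolve_left hqs
    obtain ⟨a', rfl⟩ := hqa
    have hra : r' ∣ a' := by
      refine ih hr' a' fun q'' hq'' => ?_
      obtain ⟨s', b', hqs', hsb'⟩ := H q'' hq''
      refine ⟨s', b', hqs', ?_⟩
      have h1 : q * (s' * a') = q * (r' * b') := by
        calc q * (s' * a') = s' * (q * a') := by ring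
        _ = q * r' * b' := hsb'
        _ = q * (r' * b') := by ring
      exact mul_left_cancel₀ hqp.ne_zero h1
    exact mul_dvd_mul_left q hra

/-- In a UFD, a prime strictly below a principal prime `(q)` is zero. -/
private theorem aux_below {R : Type*} [CommRing R] [IsDomain R] [UniqueFactorizationMonoid R]
    {q : R} (hq : Prime q) (hp : (Ideal.span {q}).IsPrime)
    (P : PrimeSpectrum R) (hP : P < (⟨Ideal.span {q}, hp⟩ : PrimeSpectrum R)) :
    P.asIdeal = ⊥ := by
  by_contra hb
  obtain ⟨x, hxP, hx0⟩ := Submodule.exists_mem_ne_zero_of_ne_bot hb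
  have hle : P.asIdeal ≤ Ideal.span {q} := hP.le
  have hqP : q ∉ P.asIdeal := by
    intro hqmem
    have : Ideal.span {q} ≤ P.asIdeal := by
      rw [Ideal.span_le, Set.singleton_subset_iff]; exact hqmem
    exact hP.ne (PrimeSpectrum.ext (le_antisymm hle this))
  obtain ⟨m, u, hqu, hxu⟩ := WfDvdMonoid.max_power_factor hx0 hq.irreducible
  have hu : u ∈ P.asIdeal := by
    rw [hxu] at hxP
    rcases P.isPrime.mem_or_mem hxP with h | h
    · exact absurd (P.isPrime.mem_of_pow_mem m h) hqP
    · exact h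
  exact hqu (Ideal.mem_span_singleton.mp (hle hu))

/-- In a UFD, the principal prime `(q)` has height at most one. -/
private theorem aux_height {R : Type*} [CommRing R] [IsDomain R] [UniqueFactorizationMonoid R]
    {q : R} (hq : Prime q) (hp : (Ideal.span {q}).IsPrime) :
    Order.height ((⟨Ideal.span {q}, hp⟩ : PrimeSpectrum R)) ≤ 1 := by
  apply Order.height_le
  intro c hlast
  by_contra hlen
  have hL : 2 ≤ c.length := by
    by_contra h
    push_neg at h
    interval_cases h' : c.length <;> simp_all <;> exact hlen (by norm_num)
  have h01 : (⟨c.length - 2, by omega⟩ : Fin (c.length + 1)) < ⟨c.length - 1, by omega⟩ := by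
    simp only [Fin.mk_lt_mk]; omega
  have h1l : (⟨c.length - 1, by omega⟩ : Fin (c.length + 1)) < Fin.last c.length := by
    simp only [Fin.lt_def, Fin.val_last]; omega
  have hlt1 : c ⟨c.length - 1, by omega⟩ < (⟨Ideal.span {q}, hp⟩ : PrimeSpectrum R) := by
    rw [← hlast]; exact c.strictMono h1l
  have hlt0 : c ⟨c.length - 2, by omega⟩ < (⟨Ideal.span {q}, hp⟩ : PrimeSpectrum R) :=
    (c.strictMono h01).trans hlt1
  have e1 := aux_below hq hp _ hlt1
  have e0 := aux_below hq hp _ hlt0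
  exact absurd (PrimeSpectrum.ext (e0.trans e1.symm)) (c.strictMono h01).ne

set_option maxHeartbeats 1000000 in
/-- Theorem: an injective map from a finitely generated reflexive module to a finitely
generated torsion-free module of the same rank, whose cokernel vanishes at all primes of
height at most one, is an isomorphism. -/
theorem stmt_3 {k : Type*} [Field k] (n : ℕ) (hn : 1 ≤ n)
    {M N : Type v} [AddCommGroup M] [Module (MvPolynomial (Fin (n + 1)) k) M]
    [AddCommGroup N] [Module (MvPolynomial (Fin (n + 1)) k) N]
    [Module.Finite (MvPolynomial (Fin (n + 1)) k) M]
    [Module.Finite (MvPolynomial (Fin (n + 1)) k) N]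
    [Module.IsReflexive (MvPolynomial (Fin (n + 1)) k) M]
    (hNtf : Submodule.torsion (MvPolynomial (Fin (n + 1)) k) N = ⊥)
    (hrank :
      Module.rank (FractionRing (MvPolynomial (Fin (n + 1)) k))
        (TensorProduct (MvPolynomial (Fin (n + 1)) k)
          (FractionRing (MvPolynomial (Fin (n + 1)) k)) M) =
      Module.rank (FractionRing (MvPolynomial (Fin (n + 1)) k))
        (TensorProduct (MvPolynomial (Fin (n + 1)) k)
          (FractionRing (MvPolynomial (Fin (n + 1)) k)) N))
    (α : M →ₗ[MvPolynomial (Fin (n + 1)) k] N) (hα : Function.Injective α)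
    (hloc : ∀ (p : Ideal (MvPolynomial (Fin (n + 1)) k)) [p.IsPrime],
      Order.height (⟨p, ‹p.IsPrime›⟩ : PrimeSpectrum (MvPolynomial (Fin (n + 1)) k)) ≤ 1 →
      Subsingleton (LocalizedModule p.primeCompl (N ⧸ LinearMap.range α))) :
    Function.Bijective α := by
  classical
  refine ⟨hα, ?_⟩
  set R := MvPolynomial (Fin (n + 1)) k with hRdef
  set K := FractionRing R with hKdef
  -- Step A: the cokernel is torsion: every y ∈ N satisfies r • y ∈ range α for some r ≠ 0.
  have stepA : ∀ y : N, ∃ r : R, r ≠ 0 ∧ ∃ m : M, α m = r • y := by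
    have injβ : Function.Injective (LinearMap.baseChange K α) := by
      rw [LinearMap.baseChange_eq_ltensor]
      exact Module.Flat.lTensor_preserves_injective_linearMap α hα
    have hfr : Module.finrank K (TensorProduct R K M) = Module.finrank K (TensorProduct R K N) := by
      simp only [Module.finrank, hrank]
      exact congrArg Cardinal.toNat hrank
    have surjβ : Function.Surjective (LinearMap.baseChange K α) :=
      (LinearMap.injective_iff_surjective_of_finrank_eq_finrank hfr).mp injβ
    haveI hMloc : IsLocalizedModule (nonZeroDivisors R) (TensorProduct.mk R K M 1) :=
      (isLocalizedModule_iff_isBaseChange (nonZeroDivisors R) K _).mpr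
        (TensorProduct.isBaseChange R M K)
    haveI hNloc : IsLocalizedModule (nonZeroDivisors R) (TensorProduct.mk R K N 1) :=
      (isLocalizedModule_iff_isBaseChange (nonZeroDivisors R) K _).mpr
        (TensorProduct.isBaseChange R N K)
    intro y
    obtain ⟨z, hz⟩ := surjβ (TensorProduct.mk R K N 1 y)
    obtain ⟨⟨m, s⟩, hms⟩ := IsLocalizedModule.surj (nonZeroDivisors R)
      (TensorProduct.mk R K M 1) z
    have hkey : TensorProduct.mk R K N 1 (α m - (s : R) • y) = 0 := by
      have h1 : LinearMap.baseChange K α ((s : R) • z) =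
          TensorProduct.mk R K N 1 ((s : R) • y) := by
        rw [LinearMap.map_smul_of_tower, hz, map_smul]
      have h2 : LinearMap.baseChange K α ((s : R) • z) = TensorProduct.mk R K N 1 (α m) := by
        rw [show (s : R) • z = TensorProduct.mk R K M 1 m from hms]
        simp [TensorProduct.mk_apply]
        rfl
      rw [map_sub, ← h2, h1, sub_self]
    obtain ⟨t, ht⟩ := (IsLocalizedModule.eq_zero_iff (nonZeroDivisors R)
      (TensorProduct.mk R K N 1)).mp hkey
    refine ⟨(t : R) * (s : R), ?_, (t : R) • m, ?_⟩
    · exact mul_ne_zero (nonZeroDivisors.ne_zero t.2) (nonZeroDivisors.ne_zero s.2)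
    · have : (t : R) • (α m - (s : R) • y) = 0 := ht
      rw [smul_sub, sub_eq_zero] at this
      rw [map_smul, this, smul_smul]
  -- Main argument
  intro y
  obtain ⟨r, hr, m, hm⟩ := stepA y
  -- Step B: for every functional f on M, r divides f m.
  have stepB : ∀ f : Module.Dual R M, r ∣ f m := by
    intro f
    refine aux_dvd r hr (f m) fun q hq => ?_
    haveI hpq : (Ideal.span {q}).IsPrime := (Ideal.span_singleton_prime hq.ne_zero).mpr hq
    haveI := hloc (Ideal.span {q}) (aux_height hq hpq)
    have h0 : (LocalizedModule.mk (Submodule.Quotient.mk y) 1 :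
        LocalizedModule (Ideal.span {q}).primeCompl (N ⧸ LinearMap.range α)) =
        LocalizedModule.mk 0 1 := Subsingleton.elim _ _
    rw [LocalizedModule.mk_eq] at h0
    obtain ⟨u, hu⟩ := h0
    simp only [one_smul, smul_zero] at hu
    have huy : (u : R) • y ∈ LinearMap.range α := by
      have : Submodule.Quotient.mk ((u : R) • y) =
          (0 : N ⧸ LinearMap.range α) := by
        rw [Submodule.Quotient.mk_smul]
        exact hu
      exact (Submodule.Quotient.mk_eq_zero _).mp this
    obtain ⟨m'', hm''⟩ := huy
    have hcancel : r • m'' = (u : R) • m := by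
      apply hα
      rw [map_smul, map_smul, hm'', hm, smul_smul, smul_smul, mul_comm]
    have hqu : ¬ q ∣ (u : R) := fun hdvd => u.2 (Ideal.mem_span_singleton.mpr hdvd)
    refine ⟨(u : R), f m'', hqu, ?_⟩
    have := congrArg f hcancel
    rw [map_smul, map_smul, smul_eq_mul, smul_eq_mul] at this
    rw [← this]
  -- Build the double-dual element f ↦ f m / r.
  have hspec : ∀ f : Module.Dual R M, f m = r * (stepB f).choose :=
    fun f => (stepB f).choose_spec
  let g : Module.Dual R (Module.Dual R M) :=
    { toFun := fun f => (stepB f).choose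
      map_add' := by
        intro f f'
        apply mul_left_cancel₀ hr
        rw [← hspec (f + f'), mul_add, ← hspec f, ← hspec f']
        rfl
      map_smul' := by
        intro a f
        apply mul_left_cancel₀ hr
        rw [← hspec (a • f), RingHom.id_apply, smul_eq_mul, mul_left_comm, ← hspec f]
        rfl }
  obtain ⟨m₀, hm₀⟩ := (Module.bijective_dual_eval R M).surjective g
  have hrm₀ : r • m₀ = m := by
    have hz : Module.Dual.eval R M (r • m₀ - m) = 0 := by
      refine LinearMap.ext fun f => ?_
      have h1 : f m₀ = g f := by rw [← hm₀]; rfl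
      simp only [map_sub, map_smul, LinearMap.sub_apply, LinearMap.smul_apply,
        Module.Dual.eval_apply, LinearMap.zero_apply, smul_eq_mul]
      rw [h1, hspec f]
      show r * (stepB f).choose - r * (stepB f).choose = 0
      ring
    have := (Module.bijective_dual_eval R M).injective
      (hz.trans (map_zero (Module.Dual.eval R M)).symm)
    rwa [sub_eq_zero] at this
  refine ⟨m₀, ?_⟩
  have hfin : r • (α m₀ - y) = 0 := by
    rw [smul_sub, ← map_smul, hrm₀, hm, sub_self]
  have : α m₀ - y ∈ Submodule.torsion R N :=
    (Submodule.mem_torsion_iff (α m₀ - y)).mpr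
      ⟨⟨r, mem_nonZeroDivisors_of_ne_zero hr⟩, hfin⟩
  rw [hNtf, Submodule.mem_bot, sub_eq_zero] at this
  exact this
end

section
/- Let k be a field, n ≥ 1, R = k[x_0,…,x_n]. Let Φ be an a×r matrix over R with r ≤ a such that the R-linear map φ : R^r → R^a, v ↦ Φ·v, is injective. Then the cokernel R^a / φ(R^r) is a torsion-free R-module if and only if every common divisor of all the r×r minors of Φ is a unit of R. -/
open MvPolynomial
open Matrix


/-- Over a field, if all maximal minors of an `a × r` matrix vanish,
then its kernel is nontrivial. -/
lemma field_exists_kernel {K : Type*} [Field K] {a r : ℕ}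
    (A : Matrix (Fin a) (Fin r) K)
    (hmin : ∀ g : Fin r → Fin a, Function.Injective g → (A.submatrix g id).det = 0) :
    ∃ v, v ≠ 0 ∧ A.mulVec v = 0 := by
  classical
  by_contra hcon
  push_neg at hcon
  -- mulVec is injective
  have hker : LinearMap.ker A.mulVecLin = ⊥ := by
    rw [LinearMap.ker_eq_bot']
    intro v hv
    by_contra hv0
    exact (hcon v hv0) hv
  have hinj : Function.Injective A.mulVec := by
    have := LinearMap.ker_eq_bot.mp hker
    exact this
  -- columns linearly independent
  have hli : LinearIndependent K (fun i ↦ Aᵀ i) := Matrix.mulVec_injective_iff.mp hinj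
  have hrank : A.rank = r := by
    have h1 : Aᵀ.rank = Fintype.card (Fin r) := hli.rank_matrix
    rw [← Matrix.rank_transpose, h1, Fintype.card_fin]
  -- rows span K^r
  have hspan : Submodule.span K (Set.range A) = ⊤ := by
    apply Submodule.eq_top_of_finrank_eq
    rw [show Set.range A = Set.range A.row from rfl, ← Matrix.rank_eq_finrank_span_row, hrank,
      Module.finrank_fintype_fun_eq_card, Fintype.card_fin]
  obtain ⟨t, hts, htspan, htli⟩ := exists_linearIndependent K (Set.range A)
  rw [hspan] at htspan
  haveI : Fintype t := Set.Finite.fintype (htli.setFinite)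
  have hb : Fintype.card t = r := by
    have := Module.finrank_eq_card_basis (Module.Basis.mk htli (by rw [Subtype.range_coe, htspan]))
    rw [Module.finrank_fintype_fun_eq_card, Fintype.card_fin] at this
    exact this.symm
  obtain ⟨e⟩ : Nonempty (Fin r ≃ t) := ⟨(Fintype.equivFinOfCardEq hb).symm⟩
  choose f hf using fun y : t => hts y.2
  set g : Fin r → Fin a := fun i => f (e i) with hg
  have hAg : ∀ i, A (g i) = (e i : Fin r → K) := fun i => hf (e i)
  have hginj : Function.Injective g := by
    intro i j hij
    apply e.injective
    apply Subtype.ext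
    rw [← hAg i, ← hAg j]
    show A (g i) = A (g j)
    rw [hij]
  have hrows : LinearIndependent K (fun i ↦ (A.submatrix g id) i) := by
    have : (fun i ↦ (A.submatrix g id) i) = (fun y : t => (y : Fin r → K)) ∘ e := by
      funext i
      exact hAg i
    rw [this]
    exact htli.comp e e.injective
  have : IsUnit (A.submatrix g id) := Matrix.linearIndependent_rows_iff_isUnit.mp hrows
  have hdet : (A.submatrix g id).det ≠ 0 :=
    IsUnit.ne_zero ((Matrix.isUnit_iff_isUnit_det _).mp this)
  exact hdet (hmin g hginj)

lemma domain_exists_kernel {D : Type*} [CommRing D] [IsDomain D] {a r : ℕ}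
    (A : Matrix (Fin a) (Fin r) D)
    (hmin : ∀ g : Fin r → Fin a, Function.Injective g → (A.submatrix g id).det = 0) :
    ∃ v, v ≠ 0 ∧ A.mulVec v = 0 := by
  classical
  set K := FractionRing D
  set φ : D →+* K := algebraMap D K
  have hφ : Function.Injective φ := IsFractionRing.injective D K
  have hmin' : ∀ g : Fin r → Fin a, Function.Injective g →
      ((A.map φ).submatrix g id).det = 0 := by
    intro g hg
    rw [Matrix.submatrix_map]
    have := (RingHom.map_det φ (A.submatrix g id)).symm
    rw [RingHom.mapMatrix_apply] at this
    rw [this, hmin g hg, map_zero]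
  obtain ⟨v, hv0, hv⟩ := field_exists_kernel (A.map φ) hmin'
  obtain ⟨b, hb⟩ := IsLocalization.exist_integer_multiples_of_finite
    (nonZeroDivisors D) v
  choose w hw using hb
  refine ⟨w, ?_, ?_⟩
  · intro hw0
    apply hv0
    funext i
    have : φ (w i) = (b : D) • v i := hw i
    rw [hw0] at this
    simp only [Pi.zero_apply, map_zero] at this
    have hbne : φ (b : D) ≠ 0 := by
      simp only [ne_eq, map_eq_zero_iff φ hφ]
      exact nonZeroDivisors.coe_ne_zero b
    have := this.symm
    rw [Algebra.smul_def] at this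
    rcases mul_eq_zero.mp this with h | h
    · exact absurd h hbne
    · simp [Pi.zero_apply, h]
  · have key : ∀ i, φ ((A.mulVec w) i) = 0 := by
      intro i
      rw [RingHom.map_mulVec]
      have hcv : φ ∘ w = fun j => (b : D) • v j := by
        funext j; exact hw j
      rw [hcv]
      have : (fun j => (b : D) • v j) = (b : D) • v := rfl
      rw [this, Matrix.mulVec_smul, hv]
      simp
    funext i
    exact hφ (by rw [key i]; simp)

lemma prime_step {R : Type*} [CommRing R] [IsDomain R] {a r : ℕ}
    (Φ : Matrix (Fin a) (Fin r) R) {p : R} (hp : Prime p)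
    (g : Fin r → Fin a) (hdet : ¬ p ∣ (Φ.submatrix g id).det)
    {u : Fin a → R} {w : Fin r → R} (h : Φ.mulVec w = p • u) :
    ∃ w', w = p • w' ∧ u = Φ.mulVec w' := by
  classical
  set A := Φ.submatrix g id with hA
  have hAw : A.mulVec w = p • (u ∘ g) := by
    funext i
    have : A.mulVec w i = Φ.mulVec w (g i) := by
      simp [hA, Matrix.mulVec, Matrix.submatrix, dotProduct]
    rw [this, h]
    simp
  have hdw : A.det • w = p • (A.adjugate.mulVec (u ∘ g)) := by
    have h1 : A.adjugate.mulVec (A.mulVec w) = A.det • w := by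
      rw [Matrix.mulVec_mulVec, Matrix.adjugate_mul, Matrix.smul_mulVec,
        Matrix.one_mulVec]
    rw [← h1, hAw, Matrix.mulVec_smul]
  have hdvd : ∀ j, p ∣ w j := by
    intro j
    have : A.det * w j = p * (A.adjugate.mulVec (u ∘ g)) j := congrFun hdw j
    have hpd : p ∣ A.det * w j := ⟨_, this⟩
    rcases hp.dvd_mul.mp hpd with h | h
    · exact absurd h hdet
    · exact h
  choose w' hw' using hdvd
  refine ⟨w', funext hw', ?_⟩
  have hweq : w = p • w' := funext hw'
  have : p • u = p • Φ.mulVec w' := by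
    rw [← h, hweq, Matrix.mulVec_smul]
  funext i
  have := congrFun this i
  simp only [Pi.smul_apply, smul_eq_mul] at this
  exact mul_left_cancel₀ hp.ne_zero this

/-- Theorem: for an injective map `φ : R^r → R^a` given by an `a × r` matrix `Φ`, the
cokernel is torsion-free if and only if every common divisor of the `r × r` minors of `Φ`
is a unit. -/
theorem stmt_6 {k : Type*} [Field k] (n : ℕ) (hn : 1 ≤ n)
    (a r : ℕ) (hra : r ≤ a)
    (Φ : Matrix (Fin a) (Fin r) (MvPolynomial (Fin (n + 1)) k))
    (hinj : Function.Injective Φ.mulVecLin) :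
    Submodule.torsion (MvPolynomial (Fin (n + 1)) k)
      ((Fin a → MvPolynomial (Fin (n + 1)) k) ⧸ LinearMap.range Φ.mulVecLin) = ⊥ ↔
    ∀ c : MvPolynomial (Fin (n + 1)) k,
      (∀ m ∈ {d | ∃ g : Fin r → Fin a, Function.Injective g ∧
        d = (Φ.submatrix g id).det}, c ∣ m) → IsUnit c := by
  classical
  constructor
  · -- torsion-free ⇒ gcd is unit
    intro htf c hc
    by_contra hcu
    have hminors : ∃ p : MvPolynomial (Fin (n + 1)) k,
        Prime p ∧ ∀ g : Fin r → Fin a, Function.Injective g →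
        p ∣ (Φ.submatrix g id).det := by
      rcases eq_or_ne c 0 with rfl | hc0
      · exfalso
        have hz : ∀ g : Fin r → Fin a, Function.Injective g →
            (Φ.submatrix g id).det = 0 := by
          intro g hg
          exact zero_dvd_iff.mp (hc _ ⟨g, hg, rfl⟩)
        obtain ⟨v, hv0, hv⟩ := domain_exists_kernel Φ hz
        apply hv0
        apply hinj
        simp only [Matrix.mulVecLin_apply, hv, map_zero]
      · obtain ⟨q, hqirr, hqc⟩ := WfDvdMonoid.exists_irreducible_factor hcu hc0
        exact ⟨q, hqirr.prime, fun g hg => hqc.trans (hc _ ⟨g, hg, rfl⟩)⟩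
    obtain ⟨p, hp, hpall⟩ := hminors
    set I : Ideal (MvPolynomial (Fin (n + 1)) k) := Ideal.span {p} with hI
    haveI hIp : I.IsPrime := (Ideal.span_singleton_prime hp.ne_zero).mpr hp
    have hmin0 : ∀ g : Fin r → Fin a, Function.Injective g →
        ((Φ.map (Ideal.Quotient.mk I)).submatrix g id).det = 0 := by
      intro g hg
      rw [Matrix.submatrix_map]
      have hdet := RingHom.map_det (Ideal.Quotient.mk I) (Φ.submatrix g id)
      rw [RingHom.mapMatrix_apply] at hdet
      rw [← hdet, Ideal.Quotient.eq_zero_iff_mem, hI, Ideal.mem_span_singleton]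
      exact hpall g hg
    obtain ⟨vbar, hvbar0, hvbar⟩ :=
      domain_exists_kernel (Φ.map (Ideal.Quotient.mk I)) hmin0
    choose v hv using fun i => Ideal.Quotient.mk_surjective (vbar i)
    have hvbar_eq : vbar = (Ideal.Quotient.mk I) ∘ v := by
      funext i; exact (hv i).symm
    have hdiv : ∀ i, p ∣ (Φ.mulVec v) i := by
      intro i
      rw [← Ideal.mem_span_singleton, ← hI, ← Ideal.Quotient.eq_zero_iff_mem]
      rw [RingHom.map_mulVec, ← hvbar_eq, hvbar]
      rfl
    choose u hu using hdiv
    have huv : Φ.mulVec v = p • u := by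
      funext i; rw [hu i]; rfl
    have hmem : Submodule.Quotient.mk (p := LinearMap.range Φ.mulVecLin) u ∈
        Submodule.torsion (MvPolynomial (Fin (n + 1)) k)
          ((Fin a → MvPolynomial (Fin (n + 1)) k) ⧸ LinearMap.range Φ.mulVecLin) := by
      refine ⟨⟨p, mem_nonZeroDivisors_of_ne_zero hp.ne_zero⟩, ?_⟩
      have hs : p • u ∈ LinearMap.range Φ.mulVecLin :=
        ⟨v, by simp [Matrix.mulVecLin_apply, huv]⟩
      rw [Submonoid.smul_def, ← Submodule.Quotient.mk_smul]
      exact (Submodule.Quotient.mk_eq_zero _).mpr hs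
    rw [htf, Submodule.mem_bot, Submodule.Quotient.mk_eq_zero] at hmem
    obtain ⟨w', hw'⟩ := hmem
    rw [Matrix.mulVecLin_apply] at hw'
    have hveq : v = p • w' := hinj (by
      rw [LinearMap.map_smul, Matrix.mulVecLin_apply, Matrix.mulVecLin_apply, hw', huv])
    apply hvbar0
    funext i
    rw [hvbar_eq]
    simp only [Function.comp_apply, hveq, Pi.smul_apply, smul_eq_mul, _root_.map_mul]
    have hp0 : (Ideal.Quotient.mk I) p = 0 := by
      rw [Ideal.Quotient.eq_zero_iff_mem, hI]
      exact Ideal.mem_span_singleton_self p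
    simp [hp0]
  · -- gcd unit ⇒ torsion-free
    intro hgcd
    have key : ∀ c : MvPolynomial (Fin (n + 1)) k, ∀ v : Fin a → MvPolynomial (Fin (n + 1)) k,
        c • v ∈ LinearMap.range Φ.mulVecLin → c ≠ 0 → v ∈ LinearMap.range Φ.mulVecLin := by
      intro c
      induction c using UniqueFactorizationMonoid.induction_on_prime with
      | h₁ => intro v _ h; exact absurd rfl h
      | h₂ x hx =>
        intro v hv _
        obtain ⟨xu, rfl⟩ := hx
        have := (LinearMap.range Φ.mulVecLin).smul_mem (↑xu⁻¹ : MvPolynomial (Fin (n + 1)) k) hv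
        rwa [← smul_assoc, smul_eq_mul, Units.inv_mul, one_smul] at this
      | h₃ x p hx hp ih =>
        intro v hv hpx
        have h1 : p • (x • v) ∈ LinearMap.range Φ.mulVecLin := by
          rwa [mul_smul] at hv
        obtain ⟨w, hw⟩ := h1
        rw [Matrix.mulVecLin_apply] at hw
        have hnall : ¬ ∀ m ∈ {d | ∃ g : Fin r → Fin a, Function.Injective g ∧
            d = (Φ.submatrix g id).det}, p ∣ m := fun h => hp.not_unit (hgcd p h)
        push_neg at hnall
        obtain ⟨m, ⟨g, hg, rfl⟩, hpm⟩ := hnall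
        obtain ⟨w', _, hw'⟩ := prime_step Φ hp g hpm hw
        have hxv : x • v ∈ LinearMap.range Φ.mulVecLin :=
          ⟨w', by rw [Matrix.mulVecLin_apply, hw']⟩
        exact ih v hxv hx
    rw [eq_bot_iff]
    rintro x ⟨⟨c, hcnz⟩, hcx⟩
    obtain ⟨v, rfl⟩ := Submodule.Quotient.mk_surjective _ x
    rw [Submodule.mem_bot, Submodule.Quotient.mk_eq_zero]
    have hcv : c • v ∈ LinearMap.range Φ.mulVecLin := by
      rwa [Submonoid.smul_def, ← Submodule.Quotient.mk_smul,
        Submodule.Quotient.mk_eq_zero] at hcx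
    exact key c v hcv (nonZeroDivisors.ne_zero hcnz)
end

section
/- Let k be a field, s ≥ 1, and for each i ∈ {1,…,s} let ι_i be a nonempty finite set; let ι be the disjoint union of the ι_i, let R = k[x_u : u ∈ ι], and let R_i = k[x_u : u ∈ ι_i], regarded as a subring of R. For each i, let σ_i = (f_{i,1},…,f_{i,k_i}) be a family of homogeneous polynomials in R_i, and let σ be the concatenation of the σ_i, viewed in R. Let T_σ = {v ∈ R^ι : ∑_{u ∈ ι} v_u · ∂f_{i,j}/∂x_u = 0 for all i, j} and, for each i, T_{σ_i} = {w ∈ R_i^{ι_i} : ∑_{u ∈ ι_i} w_u · ∂f_{i,j}/∂x_u = 0 for all j}. Then T_σ is the internal direct sum of the submodules M_i = {v ∈ T_σ : v_u = 0 for all u ∉ ι_i}, and for each i the R-module M_i is isomorphic to the base change R ⊗_{R_i} T_{σ_i}. In particular, if each T_{σ_i} is a free R_i-module, then T_σ is a free R-module. -/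
open MvPolynomial

section

variable {k : Type*} [Field k] {s : ℕ} (ι : Fin s → Type*)
  [∀ i, Fintype (ι i)] [∀ i, DecidableEq (ι i)] [∀ i, Nonempty (ι i)]

/-- The embedding of the small polynomial ring `k[x_u : u ∈ ι_i]` into the big polynomial
ring `k[x_u : u ∈ ⨿ ι_i]`, by renaming variables along `u ↦ ⟨i, u⟩`. -/
noncomputable def ringEmb (i : Fin s) :
    MvPolynomial (ι i) k →+* MvPolynomial ((j : Fin s) × ι j) k :=
  (rename (fun u => (⟨i, u⟩ : (j : Fin s) × ι j))).toRingHom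

/-- The big ring as an algebra over each small ring, via `ringEmb`. -/
noncomputable instance bigAlgebra (i : Fin s) :
    Algebra (MvPolynomial (ι i) k) (MvPolynomial ((j : Fin s) × ι j) k) :=
  (ringEmb ι i).toAlgebra

/-- The submodule of vectors supported on the coordinates lying in the `i`-th block. -/
noncomputable def blockSupported (i : Fin s) :
    Submodule (MvPolynomial ((j : Fin s) × ι j) k)
      (((j : Fin s) × ι j) → MvPolynomial ((j : Fin s) × ι j) k) where
  carrier := {v | ∀ u : (j : Fin s) × ι j, u.1 ≠ i → v u = 0}
  add_mem' := by
    intro a b ha hb u hu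
    simp [Pi.add_apply, ha u hu, hb u hu]
  zero_mem' := by intro u _; rfl
  smul_mem' := by
    intro c a ha u hu
    simp [Pi.smul_apply, ha u hu]

variable (κs : Fin s → ℕ) (f : ∀ i, Fin (κs i) → MvPolynomial (ι i) k)

/-- The Jacobian syzygy module `T_σ` of the concatenated sequence
`σ = (rename ⟨i,·⟩ (f i j))_{i,j}` in the big ring. -/
noncomputable def bigSyzygy :
    Submodule (MvPolynomial ((j : Fin s) × ι j) k)
      (((j : Fin s) × ι j) → MvPolynomial ((j : Fin s) × ι j) k) :=
  LinearMap.ker (Matrix.mulVecLin (Matrix.of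
    fun (p : (i : Fin s) × Fin (κs i)) (u : (j : Fin s) × ι j) =>
      pderiv u (rename (fun w => (⟨p.1, w⟩ : (j : Fin s) × ι j)) (f p.1 p.2))))

/-- The Jacobian syzygy module `T_{σ_i}` of the `i`-th sequence `σ_i = (f i j)_j` over the
small ring `k[x_u : u ∈ ι_i]`. -/
noncomputable def smallSyzygy (i : Fin s) :
    Submodule (MvPolynomial (ι i) k) (ι i → MvPolynomial (ι i) k) :=
  LinearMap.ker (Matrix.mulVecLin (Matrix.of
    fun (j : Fin (κs i)) (u : ι i) => pderiv u (f i j)))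

-- AUX

lemma entry_zero (i : Fin s) (j : Fin (κs i)) (u : (j : Fin s) × ι j) (h : u.1 ≠ i) :
    pderiv u (rename (fun w => (⟨i, w⟩ : (j : Fin s) × ι j)) (f i j)) = 0 := by
  apply pderiv_eq_zero_of_notMem_vars
  intro hmem
  obtain ⟨w, -, hw⟩ := mem_vars_rename _ _ hmem
  exact h (by rw [← hw])

lemma entry_diag (i : Fin s) (j : Fin (κs i)) (w : ι i) :
    pderiv (⟨i, w⟩ : (j : Fin s) × ι j)
      (rename (fun w => (⟨i, w⟩ : (j : Fin s) × ι j)) (f i j))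
      = rename (fun w => (⟨i, w⟩ : (j : Fin s) × ι j)) (pderiv w (f i j)) :=
  pderiv_rename (f := fun w => (⟨i, w⟩ : (j : Fin s) × ι j)) sigma_mk_injective w _

lemma mem_bigSyzygy_iff (v : ((j : Fin s) × ι j) → MvPolynomial ((j : Fin s) × ι j) k) :
    v ∈ bigSyzygy ι κs f ↔ ∀ (i : Fin s) (j : Fin (κs i)),
      ∑ w : ι i, rename (fun w => (⟨i, w⟩ : (j : Fin s) × ι j)) (pderiv w (f i j))
        * v ⟨i, w⟩ = 0 := by
  classical
  rw [bigSyzygy, LinearMap.mem_ker, funext_iff]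
  rw [Sigma.forall]
  refine forall_congr' fun i => forall_congr' fun j => ?_
  rw [Matrix.mulVecLin_apply, Matrix.mulVec, Pi.zero_apply]
  unfold dotProduct
  rw [← Finset.univ_sigma_univ, Finset.sum_sigma]
  rw [Finset.sum_eq_single_of_mem i (Finset.mem_univ i)]
  · refine Eq.congr (Finset.sum_congr rfl fun w _ => ?_) rfl
    beta_reduce
    rw [Matrix.of_apply, entry_diag]
  · intro b _ hb
    refine Finset.sum_eq_zero fun w _ => ?_
    beta_reduce
    rw [Matrix.of_apply, entry_zero ι κs f i j ⟨b, w⟩ hb, zero_mul]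

noncomputable def blockAvoiding (i : Fin s) :
    Submodule (MvPolynomial ((j : Fin s) × ι j) k)
      (((j : Fin s) × ι j) → MvPolynomial ((j : Fin s) × ι j) k) where
  carrier := {v | ∀ u : (j : Fin s) × ι j, u.1 = i → v u = 0}
  add_mem' := by
    intro a b ha hb u hu
    simp [Pi.add_apply, ha u hu, hb u hu]
  zero_mem' := by intro u _; rfl
  smul_mem' := by
    intro c a ha u hu
    simp [Pi.smul_apply, ha u hu]

noncomputable def br (i : Fin s)
    (v : ((j : Fin s) × ι j) → MvPolynomial ((j : Fin s) × ι j) k) :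
    ((j : Fin s) × ι j) → MvPolynomial ((j : Fin s) × ι j) k :=
  fun u => if u.1 = i then v u else 0

lemma br_mem {v : ((j : Fin s) × ι j) → MvPolynomial ((j : Fin s) × ι j) k}
    (hv : v ∈ bigSyzygy ι κs f) (i : Fin s) :
    br ι i v ∈ bigSyzygy ι κs f ⊓ blockSupported ι i := by
  refine Submodule.mem_inf.mpr ⟨?_, ?_⟩
  · rw [mem_bigSyzygy_iff]
    rw [mem_bigSyzygy_iff] at hv
    intro i' j
    by_cases h : i' = i
    · subst h
      rw [← hv i' j]
      refine Finset.sum_congr rfl fun w _ => ?_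
      rw [br, if_pos rfl]
    · refine Finset.sum_eq_zero fun w _ => ?_
      rw [br, if_neg h, mul_zero]
  · intro u hu
    rw [br, if_neg hu]

lemma sum_br (v : ((j : Fin s) × ι j) → MvPolynomial ((j : Fin s) × ι j) k) :
    ∑ i : Fin s, br ι i v = v := by
  funext u
  rw [Finset.sum_apply]
  simp only [br]
  rw [Finset.sum_ite_eq]
  simp

theorem internal_part : DirectSum.IsInternal (fun i : Fin s =>
    (bigSyzygy ι κs f ⊓ blockSupported ι i).comap (bigSyzygy ι κs f).subtype) := by
  rw [DirectSum.isInternal_submodule_iff_iSupIndep_and_iSup_eq_top]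
  constructor
  · intro i
    rw [disjoint_iff_inf_le]
    rintro x ⟨hx1, hx2⟩
    have hle : (⨆ (j) (_ : j ≠ i),
        (bigSyzygy ι κs f ⊓ blockSupported ι j).comap (bigSyzygy ι κs f).subtype) ≤
        (blockAvoiding ι i).comap (bigSyzygy ι κs f).subtype := by
      refine iSup_le fun j => iSup_le fun hj y hy => ?_
      intro u hu
      exact hy.2 u (by rw [hu]; exact fun h => hj h.symm)
    have hx2' := hle hx2
    refine Subtype.ext (funext fun u => ?_)
    by_cases h : u.1 = i
    · exact hx2' u h
    · exact hx1.2 u h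
  · rw [eq_top_iff]
    rintro v -
    have : v = ∑ i : Fin s, (⟨br ι i v.1, (br_mem ι κs f v.2 i).1⟩ :
        (bigSyzygy ι κs f)) := by
      refine Subtype.ext ?_
      rw [AddSubmonoidClass.coe_finset_sum]
      exact (sum_br ι v.1).symm
    rw [this]
    refine Submodule.sum_mem _ fun i _ => Submodule.mem_iSup_of_mem i ?_
    exact br_mem ι κs f v.2 i

noncomputable def splitEquiv (i : Fin s) :
    ((j : Fin s) × ι j) ≃ ({u : (j : Fin s) × ι j // u.1 ≠ i} ⊕ ι i) where
  toFun u := if h : u.1 = i then Sum.inr (h ▸ u.2) else Sum.inl ⟨u, h⟩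
  invFun x := Sum.elim (fun c => c.1) (fun w => ⟨i, w⟩) x
  left_inv := by
    rintro ⟨j, w⟩
    by_cases h : j = i
    · subst h; simp
    · simp [h]
  right_inv := by
    rintro (⟨⟨j, w⟩, h⟩ | w)
    · simp [h]
    · simp

lemma splitEquiv_mk (i : Fin s) (w : ι i) :
    splitEquiv ι i ⟨i, w⟩ = Sum.inr w := dif_pos rfl

noncomputable def bigAlgEquivRing (i : Fin s) :
    MvPolynomial ((j : Fin s) × ι j) k ≃+*
      MvPolynomial {u : (j : Fin s) × ι j // u.1 ≠ i} (MvPolynomial (ι i) k) :=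
  ((renameEquiv k (splitEquiv ι i)).trans
    (sumAlgEquiv k {u : (j : Fin s) × ι j // u.1 ≠ i} (ι i))).toRingEquiv

lemma bigAlgEquivRing_apply (i : Fin s) (x : MvPolynomial ((j : Fin s) × ι j) k) :
    bigAlgEquivRing ι i x =
      sumAlgEquiv k {u : (j : Fin s) × ι j // u.1 ≠ i} (ι i)
        (rename (splitEquiv ι i) x) := rfl

set_option maxHeartbeats 1000000 in
lemma emb_compat (i : Fin s) (g : MvPolynomial (ι i) k) :
    bigAlgEquivRing ι i (ringEmb ι i g) = C g := by
  have : (bigAlgEquivRing ι i).toRingHom.comp (ringEmb ι i) =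
      (C : MvPolynomial (ι i) k →+*
        MvPolynomial {u : (j : Fin s) × ι j // u.1 ≠ i} (MvPolynomial (ι i) k)) := by
    apply MvPolynomial.ringHom_ext
    · intro a
      show bigAlgEquivRing ι i (ringEmb ι i (C a)) = C (C a)
      have h1 : ringEmb ι i (C a) = C a := by simp [ringEmb]
      rw [h1, bigAlgEquivRing_apply, rename_C, sumAlgEquiv_C_inl]
    · intro w
      show bigAlgEquivRing ι i (ringEmb ι i (X w)) = C (X w)
      have h1 : ringEmb ι i (X w) = (X (⟨i, w⟩ : (j : Fin s) × ι j) : MvPolynomial ((j : Fin s) × ι j) k) := by simp [ringEmb]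
      rw [h1, bigAlgEquivRing_apply, rename_X, splitEquiv_mk, sumAlgEquiv_X_inr]
  exact RingHom.congr_fun this g

noncomputable def bigLinEquiv (i : Fin s) :
    MvPolynomial ((j : Fin s) × ι j) k ≃ₗ[MvPolynomial (ι i) k]
      MvPolynomial {u : (j : Fin s) × ι j // u.1 ≠ i} (MvPolynomial (ι i) k) where
  toFun := bigAlgEquivRing ι i
  invFun := (bigAlgEquivRing ι i).symm
  left_inv := (bigAlgEquivRing ι i).left_inv
  right_inv := (bigAlgEquivRing ι i).right_inv
  map_add' := map_add _
  map_smul' := fun c x => by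
    show bigAlgEquivRing ι i (c • x) = c • bigAlgEquivRing ι i x
    rw [Algebra.smul_def, Algebra.smul_def, map_mul]
    congr 1
    rw [RingHom.algebraMap_toAlgebra, emb_compat]
    rfl

instance bigFree (i : Fin s) :
    Module.Free (MvPolynomial (ι i) k) (MvPolynomial ((j : Fin s) × ι j) k) :=
  Module.Free.of_equiv (bigLinEquiv ι i).symm

noncomputable def extFun (i : Fin s) (x : ι i → MvPolynomial ((j : Fin s) × ι j) k) :
    ((j : Fin s) × ι j) → MvPolynomial ((j : Fin s) × ι j) k :=
  fun u => if h : u.1 = i then x (h ▸ u.2) else 0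

lemma extFun_mk (i : Fin s) (x : ι i → MvPolynomial ((j : Fin s) × ι j) k) (w : ι i) :
    extFun ι i x ⟨i, w⟩ = x w := dif_pos rfl

/-- The small Jacobian matrix base-changed to the big ring. -/
noncomputable def bigB (i : Fin s) :
    Matrix (Fin (κs i)) (ι i) (MvPolynomial ((j : Fin s) × ι j) k) :=
  (Matrix.of fun (j : Fin (κs i)) (w : ι i) => pderiv w (f i j)).map
    (algebraMap (MvPolynomial (ι i) k) (MvPolynomial ((j : Fin s) × ι j) k))

lemma bigB_apply (i : Fin s) (j : Fin (κs i)) (w : ι i) :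
    bigB ι κs f i j w
      = rename (fun w => (⟨i, w⟩ : (j : Fin s) × ι j)) (pderiv w (f i j)) := rfl

noncomputable def resMap (i : Fin s) :
    ↥(bigSyzygy ι κs f ⊓ blockSupported ι i) →ₗ[MvPolynomial ((j : Fin s) × ι j) k]
      (ι i → MvPolynomial ((j : Fin s) × ι j) k) where
  toFun v := fun w => v.1 ⟨i, w⟩
  map_add' := fun a b => rfl
  map_smul' := fun c a => rfl

lemma resMap_mem (i : Fin s) (v : ↥(bigSyzygy ι κs f ⊓ blockSupported ι i)) :
    resMap ι κs f i v ∈ LinearMap.ker (bigB ι κs f i).mulVecLin := by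
  rw [LinearMap.mem_ker]
  funext j
  rw [Matrix.mulVecLin_apply, Matrix.mulVec, Pi.zero_apply]
  unfold dotProduct
  have := (mem_bigSyzygy_iff ι κs f v.1).mp v.2.1 i j
  rw [← this]
  exact Finset.sum_congr rfl fun w _ => by beta_reduce; rw [bigB_apply]; rfl

lemma resMap_surj (i : Fin s) (x : ι i → MvPolynomial ((j : Fin s) × ι j) k)
    (hx : x ∈ LinearMap.ker (bigB ι κs f i).mulVecLin) :
    extFun ι i x ∈ bigSyzygy ι κs f ⊓ blockSupported ι i := by
  refine Submodule.mem_inf.mpr ⟨?_, fun u hu => dif_neg hu⟩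
  rw [mem_bigSyzygy_iff]
  intro i' j
  by_cases h : i' = i
  · subst h
    have hx' := congrFun (LinearMap.mem_ker.mp hx) j
    rw [Matrix.mulVecLin_apply, Matrix.mulVec, Pi.zero_apply] at hx'
    unfold dotProduct at hx'
    rw [← hx']
    refine Finset.sum_congr rfl fun w _ => ?_
    beta_reduce
    rw [extFun_mk, bigB_apply]
  · refine Finset.sum_eq_zero fun w _ => ?_
    rw [show extFun ι i x ⟨i', w⟩ = 0 from dif_neg h, mul_zero]

/-- The equivalence between the block-supported part of the big syzygy module and the
kernel of the base-changed small Jacobian matrix. -/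
noncomputable def eqBlock (i : Fin s) :
    ↥(bigSyzygy ι κs f ⊓ blockSupported ι i) ≃ₗ[MvPolynomial ((j : Fin s) × ι j) k]
      ↥(LinearMap.ker (bigB ι κs f i).mulVecLin) :=
  LinearEquiv.ofBijective
    ((resMap ι κs f i).codRestrict _ (resMap_mem ι κs f i))
    ⟨by
      intro a b hab
      have h2 : resMap ι κs f i a = resMap ι κs f i b := congrArg Subtype.val hab
      refine Subtype.ext (funext fun u => ?_)
      obtain ⟨j, w⟩ := u
      by_cases h : j = i
      · subst h
        exact congrFun h2 w
      · rw [a.2.2 ⟨j, w⟩ h, b.2.2 ⟨j, w⟩ h],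
     by
      rintro ⟨x, hx⟩
      refine ⟨⟨extFun ι i x, resMap_surj ι κs f i x hx⟩, ?_⟩
      refine Subtype.ext (funext fun w => ?_)
      exact extFun_mk ι i x w⟩

noncomputable def smallMap (i : Fin s) :
    (ι i → MvPolynomial (ι i) k) →ₗ[MvPolynomial (ι i) k]
      (Fin (κs i) → MvPolynomial (ι i) k) :=
  (Matrix.of fun (j : Fin (κs i)) (u : ι i) => pderiv u (f i j)).mulVecLin

lemma comm_baseChange (i : Fin s) (t : TensorProduct (MvPolynomial (ι i) k)
    (MvPolynomial ((j : Fin s) × ι j) k) (ι i → MvPolynomial (ι i) k)) :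
    (bigB ι κs f i).mulVecLin
      (TensorProduct.piScalarRight (MvPolynomial (ι i) k)
        (MvPolynomial ((j : Fin s) × ι j) k)
        (MvPolynomial ((j : Fin s) × ι j) k) (ι i) t)
    = TensorProduct.piScalarRight (MvPolynomial (ι i) k)
        (MvPolynomial ((j : Fin s) × ι j) k)
        (MvPolynomial ((j : Fin s) × ι j) k) (Fin (κs i))
        ((smallMap ι κs f i).baseChange (MvPolynomial ((j : Fin s) × ι j) k) t) := by
  induction t using TensorProduct.induction_on with
  | zero => simp
  | tmul x m =>
      funext j
      rw [LinearMap.baseChange_tmul, TensorProduct.piScalarRight_apply,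
        TensorProduct.piScalarRight_apply, TensorProduct.piScalarRightHom_tmul,
        TensorProduct.piScalarRightHom_tmul]
      rw [Matrix.mulVecLin_apply, Matrix.mulVec]
      unfold dotProduct
      have h1 : ((smallMap ι κs f i) m) j
          = ∑ w : ι i, (Matrix.of fun (j : Fin (κs i)) (u : ι i) =>
              pderiv u (f i j)) j w * m w := rfl
      beta_reduce
      rw [h1, Finset.sum_smul]
      refine Finset.sum_congr rfl fun w _ => ?_
      exact ((mul_smul ((Matrix.of fun (j : Fin (κs i)) (u : ι i) =>
        pderiv u (f i j)) j w) (m w) x).trans (Algebra.smul_def _ _)).symm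
  | add a b ha hb =>
      simp only [map_add, ha, hb]

lemma ker_bigB_eq (i : Fin s) :
    LinearMap.ker (bigB ι κs f i).mulVecLin
      = Submodule.map
          (TensorProduct.piScalarRight (MvPolynomial (ι i) k)
            (MvPolynomial ((j : Fin s) × ι j) k)
            (MvPolynomial ((j : Fin s) × ι j) k) (ι i) :
              _ →ₗ[MvPolynomial ((j : Fin s) × ι j) k] _)
          (LinearMap.ker
            ((smallMap ι κs f i).baseChange (MvPolynomial ((j : Fin s) × ι j) k))) := by
  ext x
  rw [Submodule.mem_map_equiv, LinearMap.mem_ker, LinearMap.mem_ker]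
  conv_lhs => rw [← (TensorProduct.piScalarRight (MvPolynomial (ι i) k)
    (MvPolynomial ((j : Fin s) × ι j) k)
    (MvPolynomial ((j : Fin s) × ι j) k) (ι i)).apply_symm_apply x]
  rw [comm_baseChange]
  exact LinearEquiv.map_eq_zero_iff _

/-- The isomorphism between the block part of the big syzygy and the base change of
the small syzygy module. -/
noncomputable def tensorEquiv (i : Fin s) :
    ↥(bigSyzygy ι κs f ⊓ blockSupported ι i)
      ≃ₗ[MvPolynomial ((j : Fin s) × ι j) k]
    TensorProduct (MvPolynomial (ι i) k) (MvPolynomial ((j : Fin s) × ι j) k)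
      ↥(smallSyzygy ι κs f i) := by
  have hinj : Function.Injective
      ((smallSyzygy ι κs f i).subtype.baseChange (MvPolynomial ((j : Fin s) × ι j) k)) := by
    rw [LinearMap.baseChange_eq_ltensor]
    exact Module.Flat.lTensor_preserves_injective_linearMap _
      (smallSyzygy ι κs f i).injective_subtype
  have hrange : LinearMap.ker
        ((smallMap ι κs f i).baseChange (MvPolynomial ((j : Fin s) × ι j) k))
      = LinearMap.range
        ((smallSyzygy ι κs f i).subtype.baseChange (MvPolynomial ((j : Fin s) × ι j) k)) := by
    have hex := Module.Flat.lTensor_exact (M := MvPolynomial ((j : Fin s) × ι j) k)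
      (LinearMap.exact_subtype_ker_map (smallMap ι κs f i))
    ext x
    rw [LinearMap.mem_ker, LinearMap.mem_range]
    have hfe := congrFun (LinearMap.baseChange_eq_ltensor
      (A := MvPolynomial ((j : Fin s) × ι j) k) (f := smallMap ι κs f i)) x
    rw [hfe, hex x]
    rw [Set.mem_range]
    constructor
    · rintro ⟨y, hy⟩
      exact ⟨y, hy⟩
    · rintro ⟨y, hy⟩
      exact ⟨y, hy⟩
  have E1 : ↥(LinearMap.ker (bigB ι κs f i).mulVecLin)
      ≃ₗ[MvPolynomial ((j : Fin s) × ι j) k]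
      ↥(LinearMap.ker ((smallMap ι κs f i).baseChange
        (MvPolynomial ((j : Fin s) × ι j) k))) :=
    (LinearEquiv.ofEq _ _ (ker_bigB_eq ι κs f i)).trans
      ((TensorProduct.piScalarRight (MvPolynomial (ι i) k)
        (MvPolynomial ((j : Fin s) × ι j) k)
        (MvPolynomial ((j : Fin s) × ι j) k) (ι i)).submoduleMap
          (LinearMap.ker ((smallMap ι κs f i).baseChange
            (MvPolynomial ((j : Fin s) × ι j) k)))).symm
  have E2 : ↥(LinearMap.ker ((smallMap ι κs f i).baseChange
        (MvPolynomial ((j : Fin s) × ι j) k)))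
      ≃ₗ[MvPolynomial ((j : Fin s) × ι j) k]
      TensorProduct (MvPolynomial (ι i) k) (MvPolynomial ((j : Fin s) × ι j) k)
        ↥(smallSyzygy ι κs f i) :=
    ((LinearEquiv.ofInjective _ hinj).trans
      (LinearEquiv.ofEq _ _ hrange.symm)).symm
  exact (eqBlock ι κs f i).trans (E1.trans E2)

/-- Theorem: for a concatenation `σ` of families `σ_i` of homogeneous polynomials in
disjoint groups of variables, the Jacobian syzygy module `T_σ` is the internal direct sum
of the submodules `M_i = T_σ ⊓ {v : v_u = 0 for u ∉ ι_i}`, each `M_i` is isomorphic to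
the base change `R ⊗_{R_i} T_{σ_i}`, and in particular `T_σ` is free whenever every
`T_{σ_i}` is free. -/
theorem stmt_11 (hs : 1 ≤ s)
    (deg : ∀ i, Fin (κs i) → ℕ)
    (hf : ∀ i j, (f i j).IsHomogeneous (deg i j)) :
    DirectSum.IsInternal (fun i : Fin s =>
      (bigSyzygy ι κs f ⊓ blockSupported ι i).comap (bigSyzygy ι κs f).subtype) ∧
    (∀ i : Fin s, Nonempty (
      (↥(bigSyzygy ι κs f ⊓ blockSupported ι i))
        ≃ₗ[MvPolynomial ((j : Fin s) × ι j) k]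
      TensorProduct (MvPolynomial (ι i) k) (MvPolynomial ((j : Fin s) × ι j) k)
        (smallSyzygy ι κs f i))) ∧
    ((∀ i : Fin s, Module.Free (MvPolynomial (ι i) k) (smallSyzygy ι κs f i)) →
      Module.Free (MvPolynomial ((j : Fin s) × ι j) k) (bigSyzygy ι κs f)) := by
  refine ⟨internal_part ι κs f, fun i => ⟨tensorEquiv ι κs f i⟩, ?_⟩
  intro hfree
  haveI : ∀ i : Fin s, Module.Free (MvPolynomial ((j : Fin s) × ι j) k)
      ↥((bigSyzygy ι κs f ⊓ blockSupported ι i).comap (bigSyzygy ι κs f).subtype) := by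
    intro i
    haveI := hfree i
    have e := (Submodule.comapSubtypeEquivOfLe
      (inf_le_left : bigSyzygy ι κs f ⊓ blockSupported ι i ≤ bigSyzygy ι κs f)).trans
      (tensorEquiv ι κs f i)
    exact Module.Free.of_equiv e.symm
  exact Module.Free.of_equiv
    (LinearEquiv.ofBijective (DirectSum.coeLinearMap _) (internal_part ι κs f))

end
end
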